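/- arXiv:2602.11392 — 7 statements merged into one kernel-verified Lean document; each statement's English description precedes it below -/
import Mathlib

section
/- Let L be a Boolean lattice, Q an involution lattice, and f : L → Q a normalized, finitely additive (on separated pairs), separation-preserving, monotone map. Then f preserves all binary joins: f(A ∨ B) = f(A) ∨ f(B) for all A, B in L (not only separated pairs). -/
/-- A normalized, finitely additive, separation-preserving, monotone map from a
Boolean lattice to an involution lattice preserves all binary joins. -/
theorem stmt_5 {L Q : Type*} [DistribLattice L] [BoundedOrder L] [Lattice Q] [BoundedOrder Q]
    (cL : L → L)
    (hinvL : ∀ a : L, cL (cL a) = a)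
    (hrevL : ∀ a b : L, a ≤ b → cL b ≤ cL a)
    (hinfL : ∀ a : L, a ⊓ cL a = ⊥)
    (hsupL : ∀ a : L, a ⊔ cL a = ⊤)
    (cQ : Q → Q)
    (hinvQ : ∀ a : Q, cQ (cQ a) = a)
    (hrevQ : ∀ a b : Q, a ≤ b → cQ b ≤ cQ a)
    (f : L → Q)
    (hf0 : f ⊥ = ⊥) (hf1 : f ⊤ = ⊤)
    (hadd : ∀ A B : L, A ≤ cL B → f (A ⊔ B) = f A ⊔ f B)
    (hsep : ∀ A B : L, A ≤ cL B → f A ≤ cQ (f B))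
    (hmono : ∀ A B : L, A ≤ B → f A ≤ f B) :
    ∀ A B : L, f (A ⊔ B) = f A ⊔ f B := by
  intro A B
  have hdecomp : A ⊔ (B ⊓ cL A) = A ⊔ B := by
    rw [sup_inf_left, hsupL, inf_top_eq]
  have hsepAB : A ≤ cL (B ⊓ cL A) := by
    have := hrevL (B ⊓ cL A) (cL A) inf_le_right
    rwa [hinvL] at this
  apply le_antisymm
  · calc f (A ⊔ B) = f (A ⊔ (B ⊓ cL A)) := by rw [hdecomp]
      _ = f A ⊔ f (B ⊓ cL A) := hadd _ _ hsepAB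
      _ ≤ f A ⊔ f B := sup_le_sup_left (hmono _ _ inf_le_left) _
  · exact sup_le (hmono _ _ le_sup_left) (hmono _ _ le_sup_right)
end

section
/- Let L be an orthomodular lattice, Q an orthocomplemented lattice, and f : L → Q a normalized, finitely additive, separation-preserving map. Then f preserves orthocomplements: f(A⊥) = f(A)⊥ for all A in L. (In particular, combining f(A⊥) ≤ f(A)⊥ from separation preservation with orthomodularity in Q and f(A) ∨ f(A⊥) = 1 yields equality.) -/
/-- A normalized, finitely additive, separation-preserving map between
orthomodular lattices preserves orthocomplements. -/
theorem stmt_6 {L Q : Type*} [Lattice L] [BoundedOrder L] [Lattice Q] [BoundedOrder Q]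
    (cL : L → L)
    (hinvL : ∀ a : L, cL (cL a) = a)
    (hrevL : ∀ a b : L, a ≤ b → cL b ≤ cL a)
    (hinfL : ∀ a : L, a ⊓ cL a = ⊥)
    (hsupL : ∀ a : L, a ⊔ cL a = ⊤)
    (homL : ∀ A B : L, A ≤ B → B = A ⊔ (cL A ⊓ B))
    (cQ : Q → Q)
    (hinvQ : ∀ a : Q, cQ (cQ a) = a)
    (hrevQ : ∀ a b : Q, a ≤ b → cQ b ≤ cQ a)
    (hinfQ : ∀ a : Q, a ⊓ cQ a = ⊥)
    (hsupQ : ∀ a : Q, a ⊔ cQ a = ⊤)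
    (homQ : ∀ A B : Q, A ≤ B → B = A ⊔ (cQ A ⊓ B))
    (f : L → Q)
    (hf0 : f ⊥ = ⊥) (hf1 : f ⊤ = ⊤)
    (hadd : ∀ A B : L, A ≤ cL B → f (A ⊔ B) = f A ⊔ f B)
    (hsep : ∀ A B : L, A ≤ cL B → f A ≤ cQ (f B)) :
    ∀ A : L, f (cL A) = cQ (f A) := by
  -- de Morgan in Q
  have deM : ∀ a b : Q, cQ (a ⊔ b) = cQ a ⊓ cQ b := by
    intro a b
    apply le_antisymm
    · exact le_inf (hrevQ _ _ le_sup_left) (hrevQ _ _ le_sup_right)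
    · have ha : a ≤ cQ (cQ a ⊓ cQ b) := by
        have := hrevQ _ _ (inf_le_left : cQ a ⊓ cQ b ≤ cQ a)
        rwa [hinvQ] at this
      have hb : b ≤ cQ (cQ a ⊓ cQ b) := by
        have := hrevQ _ _ (inf_le_right : cQ a ⊓ cQ b ≤ cQ b)
        rwa [hinvQ] at this
      have := hrevQ _ _ (sup_le ha hb)
      rwa [hinvQ] at this
  have ctop : cQ (⊤ : Q) = ⊥ := by
    have := hinfQ (⊤ : Q); simpa using this
  intro A
  have hAle : A ≤ cL (cL A) := by rw [hinvL]
  have hsum : f A ⊔ f (cL A) = ⊤ := by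
    rw [← hadd A (cL A) hAle, hsupL, hf1]
  have hy : f (cL A) ≤ cQ (f A) := hsep (cL A) A le_rfl
  have := homQ (f (cL A)) (cQ (f A)) hy
  rw [this, ← deM, sup_comm (f (cL A)) (f A), hsum, ctop, sup_bot_eq]
end

section
/- Let H be a complex Hilbert space and H₀ the closed real-linear span of an orthonormal basis of H. Then H₀ equals its own symplectic complement: H₀' = H₀. In particular, on an infinite-dimensional (or any nonzero) complex Hilbert space the symplectic complement fails to be an orthocomplementation, since H₀ ∧ H₀' = H₀ ≠ {0}. -/
/-
Both `H₀` and its symplectic complement consist exactly of the vectors whose coefficients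
`⟪bᵢ, ξ⟫` are all real. For the complement this is because the condition `Im⟪ξ, h⟫ = 0` is
closed and real-linear in `h`, so it suffices to test it on the basis; for `H₀` one direction
is the same argument (the basis vectors are pairwise symplectically orthogonal), and the other
is the Fourier expansion `ξ = ∑ ⟪bᵢ, ξ⟫ bᵢ`, whose partial sums lie in the real span.
-/

/-- The symplectic complement of a real-linear subspace of a complex Hilbert space. -/
def sympS {H : Type*} [NormedAddCommGroup H] [InnerProductSpace ℂ H] (S : Set H) : Set H :=
  {ξ | ∀ h ∈ S, (inner ℂ ξ h : ℂ).im = 0}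

open Set Submodule

section SymplecticComplement

variable {H : Type*} [NormedAddCommGroup H] [InnerProductSpace ℂ H]

theorem im_inner_eq_zero_comm (x y : H) :
    (inner ℂ x y : ℂ).im = 0 ↔ (inner ℂ y x : ℂ).im = 0 := by
  rw [← inner_conj_symm, Complex.conj_im, neg_eq_zero]

theorem subset_sympS_comm (S T : Set H) : S ⊆ sympS T ↔ T ⊆ sympS S := by
  constructor <;> exact fun hsub x hx y hy => (im_inner_eq_zero_comm _ _).mp (hsub hy x hx)

noncomputable def imInnerCLM (ξ : H) : H →L[ℝ] ℝ :=
  Complex.imCLM.comp ((innerSL ℂ ξ).restrictScalars ℝ)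

theorem mem_sympS_iff_subset_ker (S : Set H) (ξ : H) :
    ξ ∈ sympS S ↔ S ⊆ ((imInnerCLM ξ).ker : Set H) :=
  Iff.rfl

theorem sympS_closure_span (S : Set H) :
    sympS (closure (span ℝ S : Set H)) = sympS S := by
  ext ξ
  rw [mem_sympS_iff_subset_ker, mem_sympS_iff_subset_ker,
    (ContinuousLinearMap.isClosed_ker (imInnerCLM ξ)).closure_subset_iff]
  exact span_le

theorem sympS_singleton_zero : sympS ({0} : Set H) = univ :=
  eq_univ_of_forall fun ξ h hh => by simp [mem_singleton_iff.mp hh]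

theorem Orthonormal.range_subset_sympS_range {ι : Type*} {v : ι → H} (hv : Orthonormal ℂ v) :
    range v ⊆ sympS (range v) := by
  classical
  rintro _ ⟨i, rfl⟩ _ ⟨j, rfl⟩
  rw [orthonormal_iff_ite.mp hv i j]
  split_ifs <;> simp

end SymplecticComplement

theorem HilbertBasis.sympS_range_subset_closure_span {H ι : Type*} [NormedAddCommGroup H]
    [InnerProductSpace ℂ H] (b : HilbertBasis ι ℂ H) :
    sympS (range b) ⊆ closure (span ℝ (range b) : Set H) := by
  intro ξ hξ
  refine mem_closure_of_tendsto (b.hasSum_repr ξ) (Filter.Eventually.of_forall fun s => ?_)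
  refine sum_mem fun i _ => ?_
  have hreal : b.repr ξ i = ((b.repr ξ i).re : ℂ) := by
    refine Complex.ext rfl ?_
    rw [Complex.ofReal_im, b.repr_apply_apply, im_inner_eq_zero_comm]
    exact hξ _ ⟨i, rfl⟩
  rw [hreal, Complex.coe_smul]
  exact smul_mem _ _ (subset_span ⟨i, rfl⟩)

theorem stmt_8_general {H : Type*} [NormedAddCommGroup H] [InnerProductSpace ℂ H]
    [Nontrivial H] {ι : Type*} (b : HilbertBasis ι ℂ H)
    (H₀ : Set H) (hH₀ : H₀ = closure (Submodule.span ℝ (Set.range (b : ι → H)) : Set H)) :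
    sympS H₀ = H₀ ∧ H₀ ∩ sympS H₀ = H₀ ∧ H₀ ≠ ({0} : Set H) := by
  have hcompl : sympS H₀ = sympS (range b) := by rw [hH₀, sympS_closure_span]
  have hfix : sympS H₀ = H₀ := by
    refine Subset.antisymm (hcompl ▸ hH₀ ▸ b.sympS_range_subset_closure_span) ?_
    rw [hcompl, subset_sympS_comm, hcompl]
    exact b.orthonormal.range_subset_sympS_range
  refine ⟨hfix, by rw [hfix, inter_self], fun hzero => ?_⟩
  obtain ⟨x, hx⟩ := exists_ne (0 : H)
  have hx_mem : x ∈ sympS ({0} : Set H) := by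
    rw [sympS_singleton_zero]; exact mem_univ x
  rw [← hzero, hfix, hzero] at hx_mem
  exact hx hx_mem

/-- The closed real span `H₀` of an orthonormal basis of a complex Hilbert space equals
its own symplectic complement; in particular `H₀ ∧ H₀' = H₀ ≠ {0}`, so symplectic
complementation is not an orthocomplementation. -/
theorem stmt_8 {H : Type*} [NormedAddCommGroup H] [InnerProductSpace ℂ H] [CompleteSpace H]
    [Nontrivial H] {ι : Type*} (b : HilbertBasis ι ℂ H)
    (H₀ : Set H) (hH₀ : H₀ = closure (Submodule.span ℝ (Set.range (b : ι → H)) : Set H)) :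
    sympS H₀ = H₀ ∧ H₀ ∩ sympS H₀ = H₀ ∧ H₀ ≠ ({0} : Set H) :=
  stmt_8_general b H₀ hH₀
end

section
/- Let H₀ be a closed real-linear subspace of a complex Hilbert space H, and define H₀_C = H₀ ∩ iH₀ (the largest complex subspace contained in H₀) and H₀^C = closure(H₀ + iH₀) (the smallest closed complex subspace containing H₀). Then (H₀')^C equals the complex orthogonal complement of H₀_C, and (H₀')_C equals the complex orthogonal complement of H₀^C. -/
/-- The largest complex subspace `S ∩ iS` contained in a real subspace `S`
(for sets with `S = -S` this is exactly `S ∩ iS`). -/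
def smallC {H : Type*} [NormedAddCommGroup H] [InnerProductSpace ℂ H] (S : Set H) : Set H :=
  {x | x ∈ S ∧ Complex.I • x ∈ S}

/-- The smallest closed complex subspace containing `S`: the closure of `S + iS`. -/
def bigC {H : Type*} [NormedAddCommGroup H] [InnerProductSpace ℂ H] (S : Set H) : Set H :=
  closure {z | ∃ x ∈ S, ∃ y ∈ S, z = x + Complex.I • y}

/-- The complex orthogonal complement of a set. -/
def corthS {H : Type*} [NormedAddCommGroup H] [InnerProductSpace ℂ H] (S : Set H) : Set H :=
  {ξ | ∀ k ∈ S, (inner ℂ ξ k : ℂ) = 0}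

/-!
View `H` as a real Hilbert space with inner product `Re ⟪·, ·⟫`. Since `Im ⟪ξ, h⟫ = -Re ⟪ξ, i h⟫`,
the symplectic complement `H₀'` is the real orthogonal complement of `i H₀`, and on `i`-invariant
subspaces real and complex orthogonal complements agree. Multiplication by `i` is a real isometry,
so `i H₀' = H₀ᗮ` and `(H₀')^ℂ = closure ((i H₀)ᗮ + H₀ᗮ) = (i H₀ ∩ H₀)ᗮ` by the Hilbert-space
identity for closed subspaces. The second identity is elementary: `ξ, iξ ∈ H₀'` says that both
the imaginary and the real part of `⟪ξ, h⟫` vanish on `H₀`.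
-/

open Complex Pointwise

namespace Submodule

variable {𝕜 E : Type*} [RCLike 𝕜] [NormedAddCommGroup E] [InnerProductSpace 𝕜 E] [CompleteSpace E]

theorem topologicalClosure_sup_orthogonal {A B : Submodule 𝕜 E} (hA : IsClosed (A : Set E))
    (hB : IsClosed (B : Set E)) : (Aᗮ ⊔ Bᗮ).topologicalClosure = (A ⊓ B)ᗮ := by
  rw [← orthogonal_orthogonal_eq_closure, ← inf_orthogonal, orthogonal_orthogonal_eq_closure,
    orthogonal_orthogonal_eq_closure, hA.submodule_topologicalClosure_eq,
    hB.submodule_topologicalClosure_eq]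

end Submodule

section

variable {H : Type*} [NormedAddCommGroup H] [InnerProductSpace ℂ H]

theorem smallC_sympS (S : Set H) : smallC (sympS S) = corthS S := by
  ext ξ
  simp only [smallC, sympS, corthS, Set.mem_ofPred_eq, inner_smul_left, conj_I, ← forall₂_and]
  refine forall₂_congr fun h _ => ?_
  simp [Complex.ext_iff, and_comm]

theorem corthS_closure (S : Set H) : corthS (closure S) = corthS S := by
  ext ξ
  refine ⟨fun h k hk => h k (subset_closure hk), fun h => ?_⟩
  exact closure_minimal h (isClosed_eq (continuous_const.inner continuous_id) continuous_const)

theorem corthS_bigC {S : Set H} (hS : 0 ∈ S) : corthS (bigC S) = corthS S := by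
  rw [bigC, corthS_closure]
  ext ξ
  constructor
  · exact fun h k hk => h k ⟨k, hk, 0, hS, by simp⟩
  · rintro h _ ⟨x, hx, y, hy, rfl⟩
    simp [h x hx, h y hy]

theorem mem_I_smul_submodule_iff {K : Submodule ℝ H} {x : H} : x ∈ I • K ↔ I • x ∈ K := by
  rw [← SetLike.mem_coe, Submodule.coe_pointwise_smul,
    Set.mem_smul_set_iff_inv_smul_mem₀ I_ne_zero, inv_I, neg_smul, SetLike.mem_coe, neg_mem_iff]

theorem I_smul_I_smul_submodule (K : Submodule ℝ H) : I • I • K = K := by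
  ext x
  rw [mem_I_smul_submodule_iff, mem_I_smul_submodule_iff, smul_smul, I_mul_I, neg_one_smul,
    neg_mem_iff]

theorem isClosed_I_smul_submodule {K : Submodule ℝ H} (hK : IsClosed (K : Set H)) :
    IsClosed ((I • K : Submodule ℝ H) : Set H) := by
  rw [Submodule.coe_pointwise_smul]
  exact hK.smul_of_ne_zero I_ne_zero

theorem smallC_eq_inf_I_smul (K : Submodule ℝ H) :
    smallC (K : Set H) = (K ⊓ I • K : Submodule ℝ H) := by
  ext x
  rw [SetLike.mem_coe, Submodule.mem_inf, mem_I_smul_submodule_iff]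
  rfl

theorem bigC_eq_closure_sup_I_smul (K : Submodule ℝ H) :
    bigC (K : Set H) = (K ⊔ I • K : Submodule ℝ H).topologicalClosure := by
  rw [bigC, Submodule.topologicalClosure_coe]
  congr 1
  ext z
  simp [Submodule.mem_sup, Submodule.mem_smul_pointwise_iff_exists, eq_comm]

theorem I_smul_mem_inf_I_smul {K : Submodule ℝ H} {x : H} (hx : x ∈ K ⊓ I • K) :
    I • x ∈ K ⊓ I • K := by
  rw [Submodule.mem_inf, mem_I_smul_submodule_iff] at hx ⊢
  rw [smul_smul, I_mul_I, neg_one_smul]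
  exact ⟨hx.2, neg_mem hx.1⟩

-- `H` as a real inner product space, `⟪x, y⟫_ℝ = Re ⟪x, y⟫`; from here on `ᗮ` is the real
-- orthogonal complement.
attribute [local instance] InnerProductSpace.complexToReal

theorem real_inner_I_smul_left (x y : H) : inner ℝ (I • x) y = (inner ℂ x y).im := by
  simp [real_inner_eq_re_inner ℂ, inner_smul_left]

theorem real_inner_I_smul_right (x y : H) : inner ℝ x (I • y) = -(inner ℂ x y).im := by
  simp [real_inner_eq_re_inner ℂ, inner_smul_right]

theorem sympS_eq_orthogonal_I_smul (K : Submodule ℝ H) : sympS (K : Set H) = (I • K)ᗮ := by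
  ext ξ
  simp [sympS, Submodule.mem_orthogonal', Submodule.mem_smul_pointwise_iff_exists,
    real_inner_I_smul_right]

theorem orthogonal_I_smul (K : Submodule ℝ H) : (I • K)ᗮ = I • Kᗮ := by
  ext x
  rw [mem_I_smul_submodule_iff]
  simp [Submodule.mem_orthogonal', Submodule.mem_smul_pointwise_iff_exists,
    real_inner_I_smul_right, real_inner_I_smul_left]

theorem corthS_eq_orthogonal_of_I_smul_mem {K : Submodule ℝ H} (hK : ∀ x ∈ K, I • x ∈ K) :
    corthS (K : Set H) = Kᗮ := by
  ext ξ
  simp only [corthS, SetLike.mem_coe, Set.mem_ofPred_eq, Submodule.mem_orthogonal']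
  refine ⟨fun h k hk => by simp [real_inner_eq_re_inner ℂ, h k hk], fun h k hk => ?_⟩
  have hre : (inner ℂ ξ k).re = 0 := h k hk
  have him : (inner ℂ ξ k).im = 0 := by simpa [real_inner_I_smul_right] using h (I • k) (hK k hk)
  exact Complex.ext hre him

theorem bigC_sympS [CompleteSpace H] {K : Submodule ℝ H} (hK : IsClosed (K : Set H)) :
    bigC (sympS (K : Set H)) = corthS (smallC (K : Set H)) := by
  rw [sympS_eq_orthogonal_I_smul, bigC_eq_closure_sup_I_smul, ← orthogonal_I_smul,
    I_smul_I_smul_submodule,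
    Submodule.topologicalClosure_sup_orthogonal (isClosed_I_smul_submodule hK) hK,
    smallC_eq_inf_I_smul, corthS_eq_orthogonal_of_I_smul_mem fun _ => I_smul_mem_inf_I_smul,
    inf_comm]

end

/-- For a closed real-linear subspace `H₀` of a complex Hilbert space:
`(H₀')^ℂ` is the complex orthogonal complement of `(H₀)_ℂ`, and
`(H₀')_ℂ` is the complex orthogonal complement of `(H₀)^ℂ`. -/
theorem stmt_10 {H : Type*} [NormedAddCommGroup H] [InnerProductSpace ℂ H] [CompleteSpace H]
    (H₀ : Submodule ℝ H) (hH₀ : IsClosed (H₀ : Set H)) :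
    bigC (sympS (H₀ : Set H)) = corthS (smallC (H₀ : Set H)) ∧
      smallC (sympS (H₀ : Set H)) = corthS (bigC (H₀ : Set H)) :=
  ⟨bigC_sympS hH₀, by rw [smallC_sympS, corthS_bigC H₀.zero_mem]⟩
end

section
/- Let E₁ be a real-orthogonal projection on a complex Hilbert space whose range H₁ is standard (H₁ ∩ iH₁ = {0} and H₁ + iH₁ dense), and let E₂ be a real-orthogonal projection whose range H₂ is contained in the symplectic complement H₁'. If E₁ + E₂ − E₁ ∨ E₂ = 0, then E₂ = 0. -/
/-! Since `E₁ + E₂` is idempotent, `E₁` and `E₂` anticommute, hence `E₁ E₂ = 0`. So every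
`E₂ x` is real-orthogonal to `ran E₁`; lying in the symplectic complement, it is also
orthogonal for the imaginary part, hence complex-orthogonal to `ran E₁ + i ran E₁`, which is
dense. Thus `E₂ x = 0`. -/

theorem IsIdempotentElem.mul_eq_zero_of_add {R : Type*} [NonUnitalRing R] [IsAddTorsionFree R]
    {a b : R} (ha : IsIdempotentElem a) (hb : IsIdempotentElem b)
    (hab : IsIdempotentElem (a + b)) : a * b = 0 :=
  ha.mul_eq_zero_of_anticommute ((ha.add_iff hb).mp hab)

section

variable {H : Type*} [NormedAddCommGroup H] [InnerProductSpace ℂ H]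

theorem inner_eq_zero_of_mem_sympS {S : Set H} {ξ h : H} (hξ : ξ ∈ sympS S) (hh : h ∈ S)
    (hre : (inner ℂ ξ h : ℂ).re = 0) : inner ℂ ξ h = (0 : ℂ) :=
  Complex.ext hre (hξ h hh)

theorem eq_zero_of_inner_eq_zero_of_dense_add_I_smul {K : Set H}
    (hK : Dense {z : H | ∃ x ∈ K, ∃ y ∈ K, z = x + Complex.I • y}) {v : H}
    (hv : ∀ k ∈ K, inner ℂ v k = (0 : ℂ)) : v = 0 := by
  refine hK.eq_zero_of_inner_left ℂ ?_
  rintro _ ⟨x, hx, y, hy, rfl⟩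
  rw [inner_add_right, inner_smul_right, hv x hx, hv y hy, mul_zero, add_zero]

end

theorem stmt_15_general {H : Type*} [NormedAddCommGroup H] [InnerProductSpace ℂ H]
    (E₁ E₂ P : H →L[ℝ] H)
    (h1 : ∀ x, E₁ (E₁ x) = E₁ x) (h2 : ∀ x, E₂ (E₂ x) = E₂ x)
    (hPP : ∀ x, P (P x) = P x)
    (sa1 : ∀ x y : H, (inner ℂ (E₁ x) y : ℂ).re = (inner ℂ x (E₁ y) : ℂ).re)
    (hcyc : Dense {z : H | ∃ x ∈ LinearMap.range (E₁ : H →ₗ[ℝ] H), ∃ y ∈ LinearMap.range (E₁ : H →ₗ[ℝ] H),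
      z = x + Complex.I • y})
    (hE₂ : ∀ x : H, E₂ x ∈ sympS ((LinearMap.range (E₁ : H →ₗ[ℝ] H) : Submodule ℝ H) : Set H))
    (hzero : E₁ + E₂ - P = 0) :
    E₂ = 0 := by
  have := IsAddTorsionFree.of_isTorsionFree ℝ (H →L[ℝ] H)
  have hE₁ : IsIdempotentElem E₁ := ContinuousLinearMap.ext h1
  have hsum : IsIdempotentElem (E₁ + E₂) := sub_eq_zero.mp hzero ▸ ContinuousLinearMap.ext hPP
  have hE₁₂ : E₁ * E₂ = 0 := hE₁.mul_eq_zero_of_add (ContinuousLinearMap.ext h2) hsum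
  ext x
  refine eq_zero_of_inner_eq_zero_of_dense_add_I_smul hcyc ?_
  rintro _ ⟨y, rfl⟩
  refine inner_eq_zero_of_mem_sympS (hE₂ x) ⟨y, rfl⟩ ?_
  rw [ContinuousLinearMap.coe_coe, ← sa1, show E₁ (E₂ x) = 0 from congr($hE₁₂ x),
    inner_zero_left, Complex.zero_re]

/-- If `E₁` is a real-orthogonal projection with standard range, `E₂` a real-orthogonal
projection with range contained in the symplectic complement of `ran E₁`, and
`P = E₁ ∨ E₂` the projection onto the closed real span of the two ranges, then
`E₁ + E₂ - P = 0` forces `E₂ = 0`. -/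
theorem stmt_15 {H : Type*} [NormedAddCommGroup H] [InnerProductSpace ℂ H] [CompleteSpace H]
    (E₁ E₂ P : H →L[ℝ] H)
    (h1 : ∀ x, E₁ (E₁ x) = E₁ x) (h2 : ∀ x, E₂ (E₂ x) = E₂ x)
    (hPP : ∀ x, P (P x) = P x)
    (sa1 : ∀ x y : H, (inner ℂ (E₁ x) y : ℂ).re = (inner ℂ x (E₁ y) : ℂ).re)
    (sa2 : ∀ x y : H, (inner ℂ (E₂ x) y : ℂ).re = (inner ℂ x (E₂ y) : ℂ).re)
    (saP : ∀ x y : H, (inner ℂ (P x) y : ℂ).re = (inner ℂ x (P y) : ℂ).re)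
    (hsep : ∀ x : H, x ∈ LinearMap.range (E₁ : H →ₗ[ℝ] H) → Complex.I • x ∈ LinearMap.range (E₁ : H →ₗ[ℝ] H) → x = 0)
    (hcyc : Dense {z : H | ∃ x ∈ LinearMap.range (E₁ : H →ₗ[ℝ] H), ∃ y ∈ LinearMap.range (E₁ : H →ₗ[ℝ] H),
      z = x + Complex.I • y})
    (hE₂ : ∀ x : H, E₂ x ∈ sympS ((LinearMap.range (E₁ : H →ₗ[ℝ] H) : Submodule ℝ H) : Set H))
    (hrange : LinearMap.range (P : H →ₗ[ℝ] H) = (LinearMap.range (E₁ : H →ₗ[ℝ] H) ⊔ LinearMap.range (E₂ : H →ₗ[ℝ] H)).topologicalClosure)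
    (hzero : E₁ + E₂ - P = 0) :
    E₂ = 0 :=
  stmt_15_general E₁ E₂ P h1 h2 hPP sa1 hcyc hE₂ hzero
end

section
/- Let (V, σ) be a real symplectic vector space, μ a finitely additive probability measure on its subspace lattice with symplectic complementation, and H a finite-dimensional subspace with symplectic decomposition H = Z(H) ⊕ K where Z(H) = H ∩ H' is the center and K ⊆ Z(H)' is symplectic. Then μ(H) = μ(K). -/
/-- The symplectic complement of a subspace with respect to a bilinear form. -/
def sC {V : Type*} [AddCommGroup V] [Module ℝ V] (σ : V →ₗ[ℝ] V →ₗ[ℝ] ℝ)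
    (A : Submodule ℝ V) : Submodule ℝ V where
  carrier := {v | ∀ a ∈ A, σ v a = 0}
  add_mem' := by
    intro x y hx hy a ha
    simp [map_add, LinearMap.add_apply, hx a ha, hy a ha]
  zero_mem' := by
    intro a ha
    simp
  smul_mem' := by
    intro r x hx a ha
    simp [map_smul, LinearMap.smul_apply, hx a ha]

/-- For a finite-dimensional subspace `W` of a real symplectic vector space with a
symplectic decomposition `W = Z(W) ⊕ K`, where `Z(W) = W ∩ W'` is the center and
`K ⊆ Z(W)'` is symplectic, every finitely additive probability measure on the subspace
lattice satisfies `μ(W) = μ(K)`. -/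
theorem stmt_17 {V : Type*} [AddCommGroup V] [Module ℝ V]
    (σ : V →ₗ[ℝ] V →ₗ[ℝ] ℝ)
    (halt : ∀ v : V, σ v v = 0)
    (hnd : ∀ v : V, (∀ w : V, σ v w = 0) → v = 0)
    (μ : Submodule ℝ V → ℝ)
    (hrange : ∀ A : Submodule ℝ V, 0 ≤ μ A ∧ μ A ≤ 1)
    (h0 : μ ⊥ = 0) (h1 : μ ⊤ = 1)
    (hmono : ∀ A B : Submodule ℝ V, A ≤ B → μ A ≤ μ B)
    (hadd : ∀ A B : Submodule ℝ V, A ≤ sC σ B → μ (A ⊔ B) = μ A + μ B)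
    (W K : Submodule ℝ V) (hfin : FiniteDimensional ℝ W)
    (hKW : K ≤ W)
    (hKperp : (W ⊓ sC σ W) ≤ sC σ K)
    (hKmeet : (W ⊓ sC σ W) ⊓ K = ⊥)
    (hdecomp : (W ⊓ sC σ W) ⊔ K = W)
    (hKsymp : K ⊓ sC σ K = ⊥) :
    μ W = μ K := by
  set Z := W ⊓ sC σ W with hZ
  have hiso : Z ≤ sC σ Z := by
    intro v hv a ha
    exact hv.2 a ha.1
  have hZ0 : μ Z = 0 := by
    have := hadd Z Z hiso
    rw [sup_idem] at this
    linarith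
  have := hadd Z K hKperp
  rw [hdecomp] at this
  linarith
end

section
/- Let (V, σ) be an infinite-dimensional real symplectic vector space containing an infinite sequence of pairwise symplectically orthogonal symplectic planes. Then every finitely additive probability measure μ on the subspace lattice of V with symplectic complementation vanishes on all finite-dimensional subspaces. Consequently, if V is a separable infinite-dimensional complex Hilbert space with σ = Im⟨·,·⟩, no countably additive probability measure exists on the lattice of closed real subspaces with symplectic complementation. -/
/-- The symplectic complement of a real-linear subspace of a complex Hilbert space,
with respect to the symplectic form `Im⟨·,·⟩`. -/
def sympSub {H : Type*} [NormedAddCommGroup H] [InnerProductSpace ℂ H]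
    (K : Submodule ℝ H) : Submodule ℝ H where
  carrier := {ξ | ∀ h ∈ K, (inner ℂ ξ h : ℂ).im = 0}
  add_mem' := by
    intro x y hx hy h hh
    rw [inner_add_left]
    simp [hx h hh, hy h hh]
  zero_mem' := by
    intro h hh
    simp
  smul_mem' := by
    intro r x hx h hh
    rw [← Complex.coe_smul, inner_smul_left]
    simp [hx h hh]

/-!
A finitely additive `μ` vanishes on isotropic subspaces, since `μ A = μ (A ⊔ A) = 2 μ A`. If `u, v`
span an isotropic plane orthogonal to a symplectic pair `e, f`, then
`span {e, f} ≤ span {e + u, f + v} ⊔ span {u, v}`, so such perturbations do not change the measure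
of the plane; three of them carry a normalized symplectic plane to any orthogonal one. Given a
plane, the first five planes of the sequence contain a symplectic pair orthogonal to it (a dimension
count in `ℝ⁵`) and to all the later planes, so infinitely many pairwise orthogonal planes share its
measure `q`; then `N * q ≤ 1` for every `N` forces `q = 0`. Splitting off symplectic planes one at a
time, every finite-dimensional subspace has measure zero.

In a separable Hilbert space the real planes `ℂ ∙ eₙ` of a Hilbert basis are such a sequence for
`Im ⟨·,·⟩`, so each has measure zero; but their join is dense, and countable additivity would give
`1 = μ ⊤ = ∑ₙ μ (ℂ ∙ eₙ) = 0`.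
-/

open Module Submodule

section SymplecticComplement

variable {V : Type*} [AddCommGroup V] [Module ℝ V] {σ : V →ₗ[ℝ] V →ₗ[ℝ] ℝ}

theorem span_pair_le_iff {a b : V} {A : Submodule ℝ V} : span ℝ {a, b} ≤ A ↔ a ∈ A ∧ b ∈ A := by
  simp [span_le, Set.insert_subset_iff]

theorem left_mem_span_pair (a b : V) : a ∈ span ℝ {a, b} := subset_span (Set.mem_insert a _)

theorem right_mem_span_pair (a b : V) : b ∈ span ℝ {a, b} :=
  subset_span (Set.mem_insert_of_mem a rfl)

instance finiteDimensional_span_pair (a b : V) : FiniteDimensional ℝ (span ℝ {a, b}) :=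
  FiniteDimensional.span_of_finite ℝ (Set.toFinite _)

theorem mem_sC_span {S : Set V} {v : V} : v ∈ sC σ (span ℝ S) ↔ ∀ s ∈ S, σ v s = 0 :=
  ⟨fun h s hs => h s (subset_span hs), fun h _ ha => (span_le (p := LinearMap.ker (σ v))).2 h ha⟩

theorem mem_sC_span_pair {e f v : V} : v ∈ sC σ (span ℝ {e, f}) ↔ σ v e = 0 ∧ σ v f = 0 := by
  simp [mem_sC_span]

theorem span_pair_le_sC_span_pair_iff {a b c d : V} :
    span ℝ {a, b} ≤ sC σ (span ℝ {c, d}) ↔ σ a c = 0 ∧ σ a d = 0 ∧ σ b c = 0 ∧ σ b d = 0 := by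
  rw [span_pair_le_iff, mem_sC_span_pair, mem_sC_span_pair, and_assoc]

theorem sC_bot : sC σ ⊥ = ⊤ :=
  eq_top_iff.2 fun _ _ _ ha => by simp [(mem_bot ℝ).1 ha]

theorem sC_anti {A B : Submodule ℝ V} (h : A ≤ B) : sC σ B ≤ sC σ A :=
  fun _ hv a ha => hv a (h ha)

theorem le_sC_comm (hσ : σ.IsAlt) {A B : Submodule ℝ V} : A ≤ sC σ B ↔ B ≤ sC σ A :=
  ⟨fun h _ hb _ ha => hσ.eq_iff.1 (h ha _ hb), fun h _ ha _ hb => hσ.eq_iff.1 (h hb _ ha)⟩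

theorem exists_eq_one_of_not_le_sC {A B : Submodule ℝ V} (h : ¬ A ≤ sC σ B) :
    ∃ x ∈ A, ∃ y ∈ B, σ x y = 1 := by
  obtain ⟨x, hxA, hx⟩ := SetLike.not_le_iff_exists.1 h
  obtain ⟨y, hyB, hxy⟩ : ∃ y ∈ B, σ x y ≠ 0 := by simpa [sC] using hx
  exact ⟨x, hxA, (σ x y)⁻¹ • y, B.smul_mem _ hyB, by simp [hxy]⟩

/-- `v = (v - p) + p` with `p = σ v f • e - σ v e • f`. -/
theorem sC_span_pair_sup_eq_top (hσ : σ.IsAlt) {e f : V} (hef : σ e f = 1) :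
    sC σ (span ℝ {e, f}) ⊔ span ℝ {e, f} = ⊤ := by
  have hfe : σ f e = -1 := by rw [← hσ.neg, hef]
  refine eq_top_iff.2 fun v _ => ?_
  have hp : σ v f • e - σ v e • f ∈ span ℝ {e, f} :=
    sub_mem (smul_mem _ _ (left_mem_span_pair e f)) (smul_mem _ _ (right_mem_span_pair e f))
  have hvp : v - (σ v f • e - σ v e • f) ∈ sC σ (span ℝ {e, f}) := by
    rw [mem_sC_span_pair]
    simp [hσ.self_eq_zero, hef, hfe]
  simpa using add_mem_sup hvp hp

end SymplecticComplement

theorem finrank_span_pair_le (K : Type*) {M : Type*} [DivisionRing K] [AddCommGroup M]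
    [Module K M] (u v : M) : finrank K (span K {u, v}) ≤ 2 := by
  have := finrank_range_le_card (R := K) ![u, v]
  rwa [Matrix.range_cons, Matrix.range_cons, Matrix.range_empty, Set.union_empty,
    Set.singleton_union] at this

theorem exists_inner_ne_zero_of_finrank_add_lt {𝕜 E : Type*} [RCLike 𝕜] [NormedAddCommGroup E]
    [InnerProductSpace 𝕜 E] [FiniteDimensional 𝕜 E] (K L : Submodule 𝕜 E)
    (h : finrank 𝕜 K + finrank 𝕜 L < finrank 𝕜 E) : ∃ a ∈ Kᗮ, ∃ b ∈ Lᗮ, inner 𝕜 a b ≠ 0 := by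
  by_contra! hKL
  have hLK : Lᗮ ≤ K := fun b hb => by
    rw [← K.orthogonal_orthogonal, mem_orthogonal]
    exact fun a ha => hKL a ha b hb
  have := finrank_mono hLK
  have := L.finrank_add_finrank_orthogonal
  omega

section SympSequence

variable {V : Type*} [AddCommGroup V] [Module ℝ V] {σ : V →ₗ[ℝ] V →ₗ[ℝ] ℝ}
  {F : ℕ → Submodule ℝ V} (hF : Pairwise fun n m => F n ≤ sC σ (F m)) {x y : ℕ → V}
  (hx : ∀ n, x n ∈ F n) (hy : ∀ n, y n ∈ F n) (hxy : ∀ n, σ (x n) (y n) = 1)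
include hF hx hy hxy

/-- In `ℝ⁵` the vectors `a` orthogonal to `(σ (x i) e)ᵢ, (σ (x i) f)ᵢ` and `b` orthogonal to
`(σ (y i) e)ᵢ, (σ (y i) f)ᵢ` range over subspaces of dimension `≥ 3`, so some `⟪a, b⟫ ≠ 0`;
then `w = ∑ aᵢ xᵢ` and `w' ∝ ∑ bᵢ yᵢ`. -/
theorem exists_sympPair_le_sC (e f : V) :
    ∃ w w' : V, σ w w' = 1 ∧ span ℝ {w, w'} ≤ sC σ (span ℝ {e, f}) ∧
      ∀ n, 5 ≤ n → span ℝ {w, w'} ≤ sC σ (F n) := by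
  let cx : V → EuclideanSpace ℝ (Fin 5) := fun v => WithLp.toLp 2 fun i => σ (x i) v
  let cy : V → EuclideanSpace ℝ (Fin 5) := fun v => WithLp.toLp 2 fun i => σ (y i) v
  obtain ⟨a, ha, b, hb, hab⟩ := exists_inner_ne_zero_of_finrank_add_lt
    (span ℝ {cx e, cx f}) (span ℝ {cy e, cy f})
    (by
      have := finrank_span_pair_le ℝ (cx e) (cx f)
      have := finrank_span_pair_le ℝ (cy e) (cy f)
      simp only [finrank_euclideanSpace_fin]
      omega)
  set w := ∑ i : Fin 5, a i • x i
  set w₀ := ∑ i : Fin 5, b i • y i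
  have hw (v : V) : σ w v = inner ℝ (cx v) a := by
    simp [w, cx, map_sum, PiLp.inner_apply]
  have hw₀ (v : V) : σ w₀ v = inner ℝ (cy v) b := by
    simp [w₀, cy, map_sum, PiLp.inner_apply]
  have hxy' (i j : Fin 5) : σ (x i) (y j) = if i = j then 1 else 0 := by
    split_ifs with hij
    · exact hij ▸ hxy i
    · exact hF (Fin.val_injective.ne hij) (hx i) _ (hy j)
  have hww₀ : σ w w₀ = inner ℝ a b := by
    simp [w, w₀, map_sum, hxy', PiLp.inner_apply, mul_comm]
  have hsC (n : ℕ) (hn : 5 ≤ n) (z : ℕ → V) (hz : ∀ m, z m ∈ F m) (c : Fin 5 → ℝ) :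
      ∑ i : Fin 5, c i • z i ∈ sC σ (F n) :=
    sum_mem fun i _ => smul_mem _ _ (hF (i.2.trans_le hn).ne (hz i))
  refine ⟨w, (σ w w₀)⁻¹ • w₀, by simp [hww₀, hab], ?_, fun n hn => ?_⟩
  · rw [span_pair_le_sC_span_pair_iff]
    simp [hw, hw₀, (mem_orthogonal _ _).1 ha _ (left_mem_span_pair _ _),
      (mem_orthogonal _ _).1 ha _ (right_mem_span_pair _ _),
      (mem_orthogonal _ _).1 hb _ (left_mem_span_pair _ _),
      (mem_orthogonal _ _).1 hb _ (right_mem_span_pair _ _)]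
  · exact span_pair_le_iff.2 ⟨hsC n hn x hx a, smul_mem _ _ (hsC n hn y hy b)⟩

end SympSequence

/-- Only finite-dimensional subspaces are constrained, so that a measure on the closed subspaces of
a Hilbert space, monotone only on closed subspaces, is an instance. -/
structure IsFinDimSympMeasure {V : Type*} [AddCommGroup V] [Module ℝ V]
    (σ : V →ₗ[ℝ] V →ₗ[ℝ] ℝ) (μ : Submodule ℝ V → ℝ) : Prop where
  le_one : ∀ (A : Submodule ℝ V) [FiniteDimensional ℝ A], μ A ≤ 1
  mono : ∀ {A B : Submodule ℝ V} [FiniteDimensional ℝ A] [FiniteDimensional ℝ B],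
    A ≤ B → μ A ≤ μ B
  sup_eq_add : ∀ {A B : Submodule ℝ V} [FiniteDimensional ℝ A] [FiniteDimensional ℝ B],
    A ≤ sC σ B → μ (A ⊔ B) = μ A + μ B

namespace IsFinDimSympMeasure

variable {V : Type*} [AddCommGroup V] [Module ℝ V] {σ : V →ₗ[ℝ] V →ₗ[ℝ] ℝ}
  {μ : Submodule ℝ V → ℝ} (hμ : IsFinDimSympMeasure σ μ)
include hμ

theorem eq_zero_of_le_sC_self {A : Submodule ℝ V} [FiniteDimensional ℝ A] (h : A ≤ sC σ A) :
    μ A = 0 := by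
  have := hμ.sup_eq_add h
  rw [sup_idem] at this
  linarith

theorem map_bot : μ ⊥ = 0 :=
  hμ.eq_zero_of_le_sC_self bot_le

theorem nonneg (A : Submodule ℝ V) [FiniteDimensional ℝ A] : 0 ≤ μ A :=
  hμ.map_bot ▸ hμ.mono bot_le

theorem le_of_le_sup_isotropic {A B L : Submodule ℝ V} [FiniteDimensional ℝ A]
    [FiniteDimensional ℝ B] [FiniteDimensional ℝ L] (hA : A ≤ B ⊔ L) (hBL : B ≤ sC σ L)
    (hL : L ≤ sC σ L) : μ A ≤ μ B :=
  calc μ A ≤ μ (B ⊔ L) := hμ.mono hA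
    _ = μ B := by rw [hμ.sup_eq_add hBL, hμ.eq_zero_of_le_sC_self hL, add_zero]

theorem span_pair_le_span_pair_add (hσ : σ.IsAlt) {e f u v : V}
    (hu : u ∈ sC σ (span ℝ {e, f})) (hv : v ∈ sC σ (span ℝ {e, f})) (huv : σ u v = 0) :
    μ (span ℝ {e, f}) ≤ μ (span ℝ {e + u, f + v}) := by
  rw [mem_sC_span_pair] at hu hv
  have hvu : σ v u = 0 := hσ.eq_iff.1 huv
  refine hμ.le_of_le_sup_isotropic (L := span ℝ {u, v}) ?_ ?_ ?_
  · rw [span_pair_le_iff]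
    constructor
    · simpa using sub_mem_sup (left_mem_span_pair (e + u) (f + v)) (left_mem_span_pair u v)
    · simpa using sub_mem_sup (right_mem_span_pair (e + u) (f + v)) (right_mem_span_pair u v)
  · rw [le_sC_comm hσ, span_pair_le_sC_span_pair_iff]
    simp [hσ.self_eq_zero, hu, hv, huv, hvu]
  · rw [span_pair_le_sC_span_pair_iff]
    simp [hσ.self_eq_zero, huv, hvu]

theorem span_pair_eq_span_pair_add (hσ : σ.IsAlt) {e f u v : V}
    (hu : u ∈ sC σ (span ℝ {e, f})) (hv : v ∈ sC σ (span ℝ {e, f})) (huv : σ u v = 0) :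
    μ (span ℝ {e, f}) = μ (span ℝ {e + u, f + v}) := by
  refine (hμ.span_pair_le_span_pair_add hσ hu hv huv).antisymm ?_
  rw [mem_sC_span_pair] at hu hv
  have hvu : σ v u = 0 := hσ.eq_iff.1 huv
  simpa using hμ.span_pair_le_span_pair_add hσ (e := e + u) (f := f + v) (u := -u) (v := -v)
    (by simp [mem_sC_span_pair, hσ.self_eq_zero, hu, huv])
    (by simp [mem_sC_span_pair, hσ.self_eq_zero, hv, hvu]) (by simp [huv])

/-- Three perturbations as in `span_pair_eq_span_pair_add`:
`(e, f) ↦ (e + e', f) ↦ (e + e', f') ↦ (e', f')`. -/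
theorem span_pair_eq_of_le_sC (hσ : σ.IsAlt) {e f e' f' : V} (hef : σ e f = 1)
    (hef' : σ e' f' = 1) (h : span ℝ {e', f'} ≤ sC σ (span ℝ {e, f})) :
    μ (span ℝ {e, f}) = μ (span ℝ {e', f'}) := by
  obtain ⟨he'e, he'f, hf'e, hf'f⟩ := span_pair_le_sC_span_pair_iff.1 h
  have hfe : σ f e = -1 := by rw [← hσ.neg, hef]
  have hf'e' : σ f' e' = -1 := by rw [← hσ.neg, hef']
  have h₁ : μ (span ℝ {e, f}) = μ (span ℝ {e + e', f}) := by
    simpa using hμ.span_pair_eq_span_pair_add hσ (u := e') (v := 0)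
      (mem_sC_span_pair.2 ⟨he'e, he'f⟩) (zero_mem _) (by simp)
  have h₂ : μ (span ℝ {e + e', f}) = μ (span ℝ {e + e', f'}) := by
    simpa using hμ.span_pair_eq_span_pair_add hσ (e := e + e') (f := f) (u := 0) (v := f' - f)
      (zero_mem _)
      (by simp [mem_sC_span_pair, hσ.self_eq_zero, hf'e, hf'f, hfe, hf'e', hσ.eq_iff.1 he'f])
      (by simp)
  have h₃ : μ (span ℝ {e + e', f'}) = μ (span ℝ {e', f'}) := by
    simpa using hμ.span_pair_eq_span_pair_add hσ (e := e + e') (f := f') (u := -e) (v := 0)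
      (by simp [mem_sC_span_pair, hσ.self_eq_zero, hσ.eq_iff.1 he'e, hσ.eq_iff.1 hf'e])
      (zero_mem _) (by simp)
  rw [h₁, h₂, h₃]

theorem finset_sup_eq_sum {ι : Type*} [DecidableEq ι] {G : ι → Submodule ℝ V}
    [∀ i, FiniteDimensional ℝ (G i)] (hG : Pairwise fun i j => G i ≤ sC σ (G j)) (s : Finset ι) :
    μ (s.sup G) = ∑ i ∈ s, μ (G i) := by
  induction s using Finset.induction_on with
  | empty => simpa using hμ.map_bot
  | insert i s hi ih =>
    have hle : s.sup G ≤ sC σ (G i) :=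
      Finset.sup_le fun j hj => hG (ne_of_mem_of_not_mem hj hi)
    rw [Finset.sup_insert, sup_comm, hμ.sup_eq_add hle, Finset.sum_insert hi, ih, add_comm]

theorem span_pair_eq_zero (hσ : σ.IsAlt) {F : ℕ → Submodule ℝ V}
    (hF : Pairwise fun n m => F n ≤ sC σ (F m)) {x y : ℕ → V} (hx : ∀ n, x n ∈ F n)
    (hy : ∀ n, y n ∈ F n) (hxy : ∀ n, σ (x n) (y n) = 1)
    {e f : V} (hef : σ e f = 1) : μ (span ℝ {e, f}) = 0 := by
  obtain ⟨w, w', hww', hwe, hwF⟩ := exists_sympPair_le_sC hF hx hy hxy e f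
  let G : ℕ → Submodule ℝ V := fun n => span ℝ {x (n + 5), y (n + 5)}
  have hGF (n : ℕ) : G n ≤ F (n + 5) := span_pair_le_iff.2 ⟨hx _, hy _⟩
  have hG (n : ℕ) : μ (G n) = μ (span ℝ {e, f}) := by
    rw [← hμ.span_pair_eq_of_le_sC hσ hww' hef ((le_sC_comm hσ).1 hwe),
      hμ.span_pair_eq_of_le_sC hσ hww' (hxy _)
        ((hGF n).trans ((le_sC_comm hσ).1 (hwF _ (by omega))))]
  have hGorth : Pairwise fun n m => G n ≤ sC σ (G m) := fun n m hnm =>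
    (hGF n).trans ((hF (by omega)).trans (sC_anti (hGF m)))
  have hbound (N : ℕ) : N * μ (span ℝ {e, f}) ≤ 1 := by
    have := hμ.le_one ((Finset.range N).sup G)
    rwa [hμ.finset_sup_eq_sum hGorth, Finset.sum_congr rfl fun n _ => hG n, Finset.sum_const,
      Finset.card_range, nsmul_eq_mul] at this
  refine le_antisymm ?_ (hμ.nonneg _)
  by_contra! hpos
  obtain ⟨N, hN⟩ := exists_nat_gt (1 / μ (span ℝ {e, f}))
  linarith [hbound N, (div_lt_iff₀ hpos).1 hN]

theorem eq_zero_of_span_pair_eq_zero (hσ : σ.IsAlt)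
    (hplane : ∀ e f, σ e f = 1 → μ (span ℝ {e, f}) = 0)
    (A : Submodule ℝ V) [FiniteDimensional ℝ A] : μ A = 0 := by
  induction hA : finrank ℝ A using Nat.strong_induction_on generalizing A with
  | _ n ih =>
  by_cases hiso : A ≤ sC σ A
  · exact hμ.eq_zero_of_le_sC_self hiso
  obtain ⟨e, heA, f, hfA, hef⟩ := exists_eq_one_of_not_le_sC hiso
  have hPA : span ℝ {e, f} ≤ A := span_pair_le_iff.2 ⟨heA, hfA⟩
  have hsplit : A ⊓ sC σ (span ℝ {e, f}) ⊔ span ℝ {e, f} = A := by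
    rw [inf_sup_assoc_of_le _ hPA, sC_span_pair_sup_eq_top hσ hef, inf_top_eq]
  have hlt : finrank ℝ (A ⊓ sC σ (span ℝ {e, f}) : Submodule ℝ V) < n := by
    refine hA ▸ finrank_lt_finrank_of_lt (inf_le_left.lt_of_ne fun h => ?_)
    simpa [mem_sC_span_pair, hef] using (h.ge heA).2
  rw [← hsplit, hμ.sup_eq_add inf_le_right, ih _ hlt _ rfl, hplane e f hef, add_zero]

theorem eq_zero_of_finiteDimensional (hσ : σ.IsAlt) {F : ℕ → Submodule ℝ V}
    (hF : Pairwise fun n m => F n ≤ sC σ (F m)) {x y : ℕ → V} (hx : ∀ n, x n ∈ F n)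
    (hy : ∀ n, y n ∈ F n) (hxy : ∀ n, σ (x n) (y n) = 1) (A : Submodule ℝ V)
    [FiniteDimensional ℝ A] : μ A = 0 :=
  hμ.eq_zero_of_span_pair_eq_zero hσ (fun _ _ => hμ.span_pair_eq_zero hσ hF hx hy hxy) A

end IsFinDimSympMeasure

theorem Orthonormal.countable_of_separableSpace {𝕜 E ι : Type*} [RCLike 𝕜]
    [NormedAddCommGroup E] [InnerProductSpace 𝕜 E] [TopologicalSpace.SeparableSpace E]
    {v : ι → E} (hv : Orthonormal 𝕜 v) : Countable ι := by
  refine Pairwise.countable_of_isOpen_disjoint (s := fun i => Metric.ball (v i) (1 / 2))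
    (fun i j hij => Metric.ball_disjoint_ball ?_) (fun _ => Metric.isOpen_ball)
    (fun _ => Metric.nonempty_ball.2 (by norm_num))
  have hsq : ‖v i - v j‖ ^ 2 = 2 := by
    rw [@norm_sub_sq 𝕜, hv.1 i, hv.1 j, hv.2 hij]
    norm_num
  rw [dist_eq_norm]
  nlinarith [norm_nonneg (v i - v j)]

theorem exists_orthonormal_nat_topologicalClosure_span_eq_top {𝕜 E : Type*} [RCLike 𝕜]
    [NormedAddCommGroup E] [InnerProductSpace 𝕜 E] [CompleteSpace E]
    [TopologicalSpace.SeparableSpace E] (hinf : ¬ FiniteDimensional 𝕜 E) :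
    ∃ e : ℕ → E, Orthonormal 𝕜 e ∧ (span 𝕜 (Set.range e)).topologicalClosure = ⊤ := by
  obtain ⟨w, b, -⟩ := exists_hilbertBasis 𝕜 E
  have := b.orthonormal.countable_of_separableSpace
  have : Infinite w := by
    by_contra hfin
    have : Finite w := not_infinite_iff_finite.1 hfin
    have := Fintype.ofFinite w
    exact hinf b.toOrthonormalBasis.toBasis.finiteDimensional_of_finite
  obtain ⟨eqv⟩ := nonempty_equiv_of_countable (α := ℕ) (β := w)
  exact ⟨b ∘ eqv, b.orthonormal.comp _ eqv.injective,
    by rw [eqv.surjective.range_comp, b.dense_span]⟩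

section Hilbert

variable {H : Type*} [NormedAddCommGroup H] [InnerProductSpace ℂ H]

noncomputable def imInner : H →ₗ[ℝ] H →ₗ[ℝ] ℝ :=
  LinearMap.mk₂ ℝ (fun v w => (inner ℂ v w).im)
    (fun _ _ _ => by rw [inner_add_left, Complex.add_im])
    (fun _ _ _ => by simp [← Complex.coe_smul, mul_comm])
    (fun _ _ _ => by rw [inner_add_right, Complex.add_im])
    (fun _ _ _ => by simp [← Complex.coe_smul])

theorem imInner_apply (v w : H) : imInner v w = (inner ℂ v w).im := rfl

theorem imInner_isAlt : (imInner : H →ₗ[ℝ] H →ₗ[ℝ] ℝ).IsAlt :=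
  fun v => inner_self_im (𝕜 := ℂ) v

theorem isFinDimSympMeasure_imInner {μ : Submodule ℝ H → ℝ} (hle : ∀ K, μ K ≤ 1) (hbot : μ ⊥ = 0)
    (hmono : ∀ A B : Submodule ℝ H, IsClosed (A : Set H) → IsClosed (B : Set H) →
      A ≤ B → μ A ≤ μ B)
    (hadd : ∀ A : ℕ → Submodule ℝ H, (∀ n, IsClosed (A n : Set H)) →
      (∀ n m, n ≠ m → A n ≤ sympSub (A m)) →
      μ ((⨆ n, A n).topologicalClosure) = ∑' n, μ (A n)) :
    IsFinDimSympMeasure imInner μ where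
  le_one A _ := hle A
  mono hAB := hmono _ _ (closed_of_finiteDimensional _) (closed_of_finiteDimensional _) hAB
  sup_eq_add {A B} _ _ hAB := by
    have hAB' : A ≤ sympSub B := hAB
    have hBA : B ≤ sympSub A := (le_sC_comm imInner_isAlt).1 hAB
    have hbot' : sympSub (⊥ : Submodule ℝ H) = ⊤ := sC_bot (σ := imInner)
    let C : ℕ → Submodule ℝ H := fun | 0 => A | 1 => B | _ => ⊥
    have hC : ⨆ n, C n = A ⊔ B :=
      le_antisymm (iSup_le (by rintro (_ | _ | n) <;> simp [C]))
        (sup_le (le_iSup C 0) (le_iSup C 1))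
    have h := hadd C (by
      rintro (_ | _ | n)
      exacts [A.closed_of_finiteDimensional, B.closed_of_finiteDimensional,
        (⊥ : Submodule ℝ H).closed_of_finiteDimensional])
      (by rintro (_ | _ | n) (_ | _ | m) h <;> simp_all [C])
    rwa [hC, (closed_of_finiteDimensional (A ⊔ B)).submodule_topologicalClosure_eq,
      tsum_eq_sum (s := Finset.range 2) (by rintro (_ | _ | n) hn <;> simp_all [C]),
      Finset.sum_range_succ, Finset.sum_range_one] at h

theorem not_exists_sympMeasure_of_separable [CompleteSpace H] [TopologicalSpace.SeparableSpace H]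
    (hinf : ¬ FiniteDimensional ℂ H) {μ : Submodule ℝ H → ℝ} (hle : ∀ K, μ K ≤ 1)
    (hbot : μ ⊥ = 0) (htop : μ ⊤ = 1)
    (hmono : ∀ A B : Submodule ℝ H, IsClosed (A : Set H) → IsClosed (B : Set H) →
      A ≤ B → μ A ≤ μ B)
    (hadd : ∀ A : ℕ → Submodule ℝ H, (∀ n, IsClosed (A n : Set H)) →
      (∀ n m, n ≠ m → A n ≤ sympSub (A m)) →
      μ ((⨆ n, A n).topologicalClosure) = ∑' n, μ (A n)) : False := by
  obtain ⟨e, he, hdense⟩ := exists_orthonormal_nat_topologicalClosure_span_eq_top hinf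
  let A : ℕ → Submodule ℝ H := fun n => (ℂ ∙ e n).restrictScalars ℝ
  have hAorth : Pairwise fun n m => A n ≤ sympSub (A m) := by
    intro n m hnm z hz w hw
    obtain ⟨c, rfl⟩ := mem_span_singleton.1 ((restrictScalars_mem ℝ _ _).1 hz)
    obtain ⟨d, rfl⟩ := mem_span_singleton.1 ((restrictScalars_mem ℝ _ _).1 hw)
    simp [he.2 hnm]
  have hAtop : (⨆ n, A n).topologicalClosure = ⊤ := by
    rw [← restrictScalars_iSup, ← span_range_eq_iSup, ← dense_iff_topologicalClosure_eq_top]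
    exact (dense_iff_topologicalClosure_eq_top (s := span ℂ (Set.range e))).2 hdense
  have (n : ℕ) : FiniteDimensional ℝ (A n) := FiniteDimensional.complexToReal (ℂ ∙ e n)
  have hμ := isFinDimSympMeasure_imInner hle hbot hmono hadd
  have hA (n : ℕ) : μ (A n) = 0 :=
    hμ.eq_zero_of_finiteDimensional imInner_isAlt hAorth (x := e) (y := fun n => Complex.I • e n)
      (fun n => mem_span_singleton_self (e n)) (fun n => smul_mem _ _ (mem_span_singleton_self _))
      (fun n => by simp [imInner_apply, he.1 n]) (A n)
  simpa [hAtop, htop, hA] using hadd A (fun n => (ℂ ∙ e n).closed_of_finiteDimensional)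
    (fun n m hnm => hAorth hnm)

end Hilbert

/-- (1) In an infinite-dimensional real symplectic vector space containing an infinite
sequence of pairwise symplectically orthogonal symplectic planes, every finitely additive
probability measure on the subspace lattice vanishes on all finite-dimensional subspaces.
(2) Consequently, on a separable infinite-dimensional complex Hilbert space there is no
countably additive probability measure on the lattice of closed real subspaces with
symplectic complementation. -/
theorem stmt_19 :
    (∀ (V : Type) (_ : AddCommGroup V), ∀ (_ : Module ℝ V),
      ∀ σ : V →ₗ[ℝ] V →ₗ[ℝ] ℝ,
      (∀ v : V, σ v v = 0) →
      (∀ v : V, (∀ w : V, σ v w = 0) → v = 0) →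
      ∀ F : ℕ → Submodule ℝ V,
        (∀ n, Module.finrank ℝ (F n) = 2) →
        (∀ n, F n ⊓ sC σ (F n) = ⊥) →
        (∀ n m, n ≠ m → F n ≤ sC σ (F m)) →
      ∀ μ : Submodule ℝ V → ℝ,
        (∀ A : Submodule ℝ V, 0 ≤ μ A ∧ μ A ≤ 1) →
        μ ⊥ = 0 → μ ⊤ = 1 →
        (∀ A B : Submodule ℝ V, A ≤ B → μ A ≤ μ B) →
        (∀ A B : Submodule ℝ V, A ≤ sC σ B → μ (A ⊔ B) = μ A + μ B) →
      ∀ A : Submodule ℝ V, FiniteDimensional ℝ A → μ A = 0) ∧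
    (∀ (H : Type) (_ : NormedAddCommGroup H), ∀ (_ : InnerProductSpace ℂ H),
      ∀ (_ : CompleteSpace H) (_ : TopologicalSpace.SeparableSpace H),
      ¬ FiniteDimensional ℂ H →
      ¬ ∃ μ : Submodule ℝ H → ℝ,
        (∀ K : Submodule ℝ H, 0 ≤ μ K ∧ μ K ≤ 1) ∧
        μ ⊥ = 0 ∧ μ ⊤ = 1 ∧
        (∀ A B : Submodule ℝ H, IsClosed (A : Set H) → IsClosed (B : Set H) →
          A ≤ B → μ A ≤ μ B) ∧
        (∀ A : ℕ → Submodule ℝ H, (∀ n, IsClosed (A n : Set H)) →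
          (∀ n m, n ≠ m → A n ≤ sympSub (A m)) →
          μ ((⨆ n, A n).topologicalClosure) = ∑' n, μ (A n))) := by
  refine ⟨fun V _ _ σ hσ _ F hrank hnd hF μ hμ1 _ _ hmono hadd A _ => ?_,
    fun H _ _ _ _ hinf ⟨μ, hμ1, hbot, htop, hmono, hadd⟩ =>
      not_exists_sympMeasure_of_separable hinf (fun K => (hμ1 K).2) hbot htop hmono hadd⟩
  have hμ : IsFinDimSympMeasure σ μ :=
    ⟨fun A _ => (hμ1 A).2, fun h => hmono _ _ h, fun h => hadd _ _ h⟩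
  have hpair (n : ℕ) : ∃ x ∈ F n, ∃ y ∈ F n, σ x y = 1 := by
    refine exists_eq_one_of_not_le_sC fun hiso => ?_
    have := hrank n
    rw [← inf_eq_left.2 hiso, hnd n, finrank_bot] at this
    exact absurd this (by norm_num)
  choose x hx y hy hxy using hpair
  exact hμ.eq_zero_of_finiteDimensional hσ (fun n m hnm => hF n m hnm) hx hy hxy A
end
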